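/- Let b_{mn} (m,n ∈ ℤ) be the generalized Grunsky coefficients of a normalized disjoint pair (f,g) of univalent functions whose complementary set F = ℂ∖(f(𝔻)∪g(𝔻*)) has Lebesgue measure zero, and let B₁,B₂,B₃,B₄ be the associated operators on ℓ², (B₁)_{mn}=√(mn) b_{−m,−n}, (B₂)_{mn}=√(mn) b_{−m,n}, (B₃)_{mn}=√(mn) b_{m,−n}, (B₄)_{mn}=√(mn) b_{mn}. Then B₁B₁* + B₂B₂* = I, B₃B₁* + B₄B₂* = 0, B₁B₃* + B₂B₄* = 0, and B₃B₃* + B₄B₄* = I; equivalently the block operator 𝐁 = (B₁ B₂; B₃ B₄) on ℓ²⊕ℓ² satisfies 𝐁𝐁* = I. -/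

import Mathlib

/-! The Grunsky equality says that the matrix `A k j = √|kj| b_{kj}` (`k j : ℤ`) is isometric on
finitely supported sequences vanishing at `0`. Testing it on `δ_k` and on `δ_k + c δ_{k'}` for
`c = 1, i` shows (polarization) that the columns of `A` indexed by `k ≠ 0` are orthonormal in
`ℓ²(ℤ)`. Since `b` is symmetric, the `(m, n)` entry of each of the four block sums, e.g.
`B₁ B₃* + B₂ B₄*`, is the inner product of two such columns: the rows `j < 0` come from the first
product, the rows `j > 0` from the second, and row `0` of `A` vanishes. -/

open ContinuousLinearMap

noncomputable section

/-- The Hilbert space ℓ² of square-summable complex sequences (indexed from 0;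
    the index n ∈ ℕ corresponds to the classical index n+1 ≥ 1). -/
abbrev Hl2 : Type := lp (fun _ : ℕ => ℂ) 2

def el (n : ℕ) : Hl2 := lp.single 2 n 1

lemma el_apply (n m : ℕ) : (el n : ℕ → ℂ) m = if m = n then 1 else 0 := by
  simp [el, lp.single_apply, Pi.single_apply]

lemma apply_eq_inner_el (x : Hl2) (m : ℕ) : (x : ℕ → ℂ) m = inner ℂ (el m) x := by
  simp [el, lp.inner_single_left]

lemma adjoint_apply_el_apply (X : Hl2 →L[ℂ] Hl2) (m j : ℕ) :
    (adjoint X (el m) : ℕ → ℂ) j = starRingEnd ℂ ((X (el j) : ℕ → ℂ) m) := by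
  rw [apply_eq_inner_el, adjoint_inner_right, ← inner_conj_symm, ← apply_eq_inner_el]

lemma hasSum_comp_adjoint_el_apply (X Y : Hl2 →L[ℂ] Hl2) (m n : ℕ) :
    HasSum (fun j => (X (el j) : ℕ → ℂ) m * starRingEnd ℂ ((Y (el j) : ℕ → ℂ) n))
      ((X.comp (adjoint Y) (el n) : ℕ → ℂ) m) := by
  have h := lp.hasSum_inner (𝕜 := ℂ) (adjoint X (el m)) (adjoint Y (el n))
  rw [adjoint_inner_left, ← apply_eq_inner_el] at h
  simpa [adjoint_apply_el_apply, mul_comm] using h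

lemma ext_el {T S : Hl2 →L[ℂ] Hl2} (h : ∀ m n, (T (el n) : ℕ → ℂ) m = (S (el n) : ℕ → ℂ) m) :
    T = S :=
  lp.ext_continuousLinearMap ENNReal.ofNat_ne_top fun n =>
    ContinuousLinearMap.ext_ring (lp.ext (funext fun m => h m n))

lemma lp.norm_sq_eq_tsum {ι : Type*} {E : ι → Type*} [∀ i, NormedAddCommGroup (E i)]
    (x : lp E 2) : ‖x‖ ^ 2 = ∑' i, ‖x i‖ ^ 2 := by
  have h := lp.norm_rpow_eq_tsum (p := 2) (by norm_num) x
  norm_num at h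
  exact_mod_cast h

lemma inner_eq_zero_of_norm_add_smul_sq {E : Type*} [NormedAddCommGroup E] [InnerProductSpace ℂ E]
    {x y : E} (h : ∀ c : ℂ, ‖x + c • y‖ ^ 2 = ‖x‖ ^ 2 + ‖c • y‖ ^ 2) : inner ℂ x y = 0 := by
  have hre : ∀ c : ℂ, (c * inner ℂ x y).re = 0 := fun c => by
    have := h c
    rw [norm_add_sq (𝕜 := ℂ), inner_smul_right] at this
    simpa using this
  apply Complex.ext
  · simpa using hre 1
  · simpa using hre Complex.I

def IsIsometricOn {ι κ : Type*} (A : ι → κ → ℂ) (S : Set κ) : Prop :=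
  ∀ l : κ → ℂ, l.support.Finite → l.support ⊆ S →
    ∑' i, ‖∑' j, A i j * l j‖ ^ 2 = ∑' j, ‖l j‖ ^ 2

namespace IsIsometricOn

variable {ι κ : Type*} {A : ι → κ → ℂ} {S : Set κ}

lemma tsum_norm_sq_column (hA : IsIsometricOn A S) {k : κ} (hk : k ∈ S) :
    ∑' i, ‖A i k‖ ^ 2 = 1 := by
  classical
  have h := hA (Pi.single k 1) ((Set.finite_singleton k).subset Pi.support_single_subset)
    (Pi.support_single_subset.trans (Set.singleton_subset_iff.2 hk))
  rw [tsum_eq_single k fun j hj => by simp [hj]] at h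
  simpa [Pi.single_apply] using h

lemma tsum_norm_sq_add_mul (hA : IsIsometricOn A S) {k k' : κ} (hk : k ∈ S) (hk' : k' ∈ S)
    (hne : k ≠ k') (c : ℂ) : ∑' i, ‖A i k + c * A i k'‖ ^ 2 = 1 + ‖c‖ ^ 2 := by
  classical
  have hsupp : Function.support (Pi.single k 1 + Pi.single k' c : κ → ℂ) ⊆ {k, k'} := by
    rw [Set.insert_eq]
    exact (Function.support_add _ _).trans
      (Set.union_subset_union Pi.support_single_subset Pi.support_single_subset)
  have h := hA _ ((Set.toFinite {k, k'}).subset hsupp)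
    (hsupp.trans (Set.insert_subset hk (Set.singleton_subset_iff.2 hk')))
  have hpair : ∀ {M : Type} [AddCommMonoid M] [TopologicalSpace M] (f : κ → M),
      (∀ j, j ≠ k → j ≠ k' → f j = 0) → ∑' j, f j = f k + f k' := fun f hf => by
    rw [tsum_eq_sum (s := {k, k'}) (by simpa using hf), Finset.sum_pair hne]
  have hrow : ∀ i, ∑' j, A i j * (Pi.single k 1 + Pi.single k' c : κ → ℂ) j = A i k + c * A i k' :=
    fun i => by rw [hpair _ fun j h1 h2 => by simp [h1, h2]]; simp [hne, hne.symm, mul_comm]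
  simp only [hrow] at h
  rw [h, hpair _ fun j h1 h2 => by simp [h1, h2]]
  simp [hne, hne.symm]

lemma memℓp_column (hA : IsIsometricOn A S) {k : κ} (hk : k ∈ S) :
    Memℓp (fun i => A i k) 2 := by
  have h := hA.tsum_norm_sq_column hk
  have hs : Summable fun i => ‖A i k‖ ^ 2 := by
    by_contra hs
    rw [tsum_eq_zero_of_not_summable hs] at h
    exact zero_ne_one h
  exact memℓp_gen (by simpa using hs)

def column (hA : IsIsometricOn A S) (k : S) : lp (fun _ : ι => ℂ) 2 :=
  ⟨fun i => A i k, hA.memℓp_column k.2⟩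

lemma orthonormal_column (hA : IsIsometricOn A S) : Orthonormal ℂ hA.column := by
  have hnorm : ∀ k, ‖hA.column k‖ = 1 := fun k => by
    rw [← pow_eq_one_iff_of_nonneg (norm_nonneg _) two_ne_zero, lp.norm_sq_eq_tsum]
    exact hA.tsum_norm_sq_column k.2
  refine ⟨hnorm, fun k k' hne => inner_eq_zero_of_norm_add_smul_sq fun c => ?_⟩
  rw [norm_smul, hnorm, hnorm, mul_one, one_pow, lp.norm_sq_eq_tsum]
  exact hA.tsum_norm_sq_add_mul k.2 k'.2 (Subtype.coe_ne_coe.2 hne) c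

lemma hasSum_mul_conj [DecidableEq κ] (hA : IsIsometricOn A S) {k k' : κ} (hk : k ∈ S)
    (hk' : k' ∈ S) :
    HasSum (fun i => A i k * starRingEnd ℂ (A i k')) (if k = k' then 1 else 0) := by
  classical
  have h := lp.hasSum_inner (𝕜 := ℂ) (hA.column ⟨k', hk'⟩) (hA.column ⟨k, hk⟩)
  rw [orthonormal_iff_ite.1 hA.orthonormal_column] at h
  simpa [column, mul_comm, eq_comm] using h

end IsIsometricOn

lemma IsIsometricOn.comp_adjoint_add_comp_adjoint_el_apply {κ : Type*} [DecidableEq κ]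
    {A : ℤ → κ → ℂ} {S : Set κ} (hA : IsIsometricOn A S) (hA₀ : ∀ k, A 0 k = 0)
    {X X' Y Y' : Hl2 →L[ℂ] Hl2} {m n : ℕ}
    {k k' : κ} (hk : k ∈ S) (hk' : k' ∈ S)
    (hX : ∀ j : ℕ, (X (el j) : ℕ → ℂ) m = A (-(j + 1 : ℕ)) k)
    (hX' : ∀ j : ℕ, (X' (el j) : ℕ → ℂ) m = A (j + 1 : ℕ) k)
    (hY : ∀ j : ℕ, (Y (el j) : ℕ → ℂ) n = A (-(j + 1 : ℕ)) k')
    (hY' : ∀ j : ℕ, (Y' (el j) : ℕ → ℂ) n = A (j + 1 : ℕ) k') :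
    ((X.comp (adjoint Y) + X'.comp (adjoint Y')) (el n) : ℕ → ℂ) m = if k = k' then 1 else 0 := by
  set f : ℤ → ℂ := fun i => A i k * starRingEnd ℂ (A i k')
  have hneg : HasSum (fun j : ℕ => f (-(j + 1))) ((X.comp (adjoint Y) (el n) : ℕ → ℂ) m) := by
    convert hasSum_comp_adjoint_el_apply X Y m n using 2 with j
    rw [hX, hY]
    push_cast
    rfl
  have hpos : HasSum (fun j : ℕ => f (j + 1)) ((X'.comp (adjoint Y') (el n) : ℕ → ℂ) m) := by
    convert hasSum_comp_adjoint_el_apply X' Y' m n using 2 with j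
    rw [hX', hY']
    push_cast
    rfl
  have h := hpos.of_add_one_of_neg_add_one hneg
  rw [show f 0 = 0 by simp [f, hA₀], add_zero] at h
  rw [add_apply, lp.coeFn_add, Pi.add_apply, add_comm]
  exact h.unique (hA.hasSum_mul_conj hk hk')

def grunskyMatrix (b : ℤ → ℤ → ℂ) (k j : ℤ) : ℂ :=
  (Real.sqrt ((|k * j| : ℤ) : ℝ) : ℂ) * b k j

lemma sqrt_mul_eq_grunskyMatrix {b : ℤ → ℤ → ℂ} (hsym : ∀ m n : ℤ, b m n = b n m) {k j : ℤ}
    {m n : ℕ} (hk : k.natAbs = m) (hj : j.natAbs = n) :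
    (Real.sqrt ((m * n : ℕ) : ℝ) : ℂ) * b k j = grunskyMatrix b j k := by
  rw [grunskyMatrix, hsym, abs_mul, Int.abs_eq_natAbs, Int.abs_eq_natAbs, hj, hk, mul_comm m]
  push_cast
  rfl

lemma grunskyMatrix_zero_left (b : ℤ → ℤ → ℂ) (k : ℤ) : grunskyMatrix b 0 k = 0 := by
  simp [grunskyMatrix]

/-- Given Grunsky coefficients b_{mn} (m,n ∈ ℤ) of a normalized disjoint pair
    satisfying the generalized Grunsky equality (Hummel; this holds exactly when
    the complementary set F has zero Lebesgue measure), the associated operators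
    B₁,B₂,B₃,B₄ on ℓ² with matrix entries √(mn)·b_{∓m,∓n} satisfy
    B₁B₁* + B₂B₂* = I, B₃B₁* + B₄B₂* = 0, B₁B₃* + B₂B₄* = 0, B₃B₃* + B₄B₄* = I,
    i.e. the block operator 𝐁 = (B₁ B₂; B₃ B₄) satisfies 𝐁𝐁* = I. -/
theorem stmt_7 (b : ℤ → ℤ → ℂ)
    (hsym : ∀ m n : ℤ, b m n = b n m)
    (hGrunsky : ∀ l : ℤ → ℂ, (Function.support l).Finite → l 0 = 0 →
      ∑' k : ℤ,
          ‖∑' j : ℤ, (Real.sqrt ((|k * j| : ℤ) : ℝ) : ℂ) * b k j * l j‖ ^ 2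
        = ∑' k : ℤ, ‖l k‖ ^ 2)
    (B₁ B₂ B₃ B₄ : Hl2 →L[ℂ] Hl2)
    (hB₁ : ∀ m n : ℕ, (B₁ (el n) : ∀ _ : ℕ, ℂ) m
      = (Real.sqrt (((m + 1) * (n + 1) : ℕ)) : ℂ) * b (-(m + 1 : ℕ)) (-(n + 1 : ℕ)))
    (hB₂ : ∀ m n : ℕ, (B₂ (el n) : ∀ _ : ℕ, ℂ) m
      = (Real.sqrt (((m + 1) * (n + 1) : ℕ)) : ℂ) * b (-(m + 1 : ℕ)) ((n + 1 : ℕ)))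
    (hB₃ : ∀ m n : ℕ, (B₃ (el n) : ∀ _ : ℕ, ℂ) m
      = (Real.sqrt (((m + 1) * (n + 1) : ℕ)) : ℂ) * b ((m + 1 : ℕ)) (-(n + 1 : ℕ)))
    (hB₄ : ∀ m n : ℕ, (B₄ (el n) : ∀ _ : ℕ, ℂ) m
      = (Real.sqrt (((m + 1) * (n + 1) : ℕ)) : ℂ) * b ((m + 1 : ℕ)) ((n + 1 : ℕ))) :
    B₁.comp (adjoint B₁) + B₂.comp (adjoint B₂) = 1
      ∧ B₃.comp (adjoint B₁) + B₄.comp (adjoint B₂) = 0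
      ∧ B₁.comp (adjoint B₃) + B₂.comp (adjoint B₄) = 0
      ∧ B₃.comp (adjoint B₃) + B₄.comp (adjoint B₄) = 1 := by
  have hA : IsIsometricOn (grunskyMatrix b) {0}ᶜ := fun l hfin hsupp =>
    hGrunsky l hfin (Function.notMem_support.1 fun h0 => hsupp h0 rfl)
  have hA₀ := grunskyMatrix_zero_left b
  have h₁ := fun m j => (hB₁ m j).trans (sqrt_mul_eq_grunskyMatrix hsym (by omega) (by omega))
  have h₂ := fun m j => (hB₂ m j).trans (sqrt_mul_eq_grunskyMatrix hsym (by omega) (by omega))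
  have h₃ := fun m j => (hB₃ m j).trans (sqrt_mul_eq_grunskyMatrix hsym (by omega) (by omega))
  have h₄ := fun m j => (hB₄ m j).trans (sqrt_mul_eq_grunskyMatrix hsym (by omega) (by omega))
  refine ⟨ext_el fun m n => ?_, ext_el fun m n => ?_, ext_el fun m n => ?_, ext_el fun m n => ?_⟩
  · rw [hA.comp_adjoint_add_comp_adjoint_el_apply hA₀ (by simp; omega) (by simp; omega)
      (h₁ m) (h₂ m) (h₁ n) (h₂ n)]
    simp [el_apply]
  · rw [hA.comp_adjoint_add_comp_adjoint_el_apply hA₀ (by simp; omega) (by simp; omega)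
      (h₃ m) (h₄ m) (h₁ n) (h₂ n), if_neg (by omega)]
    rfl
  · rw [hA.comp_adjoint_add_comp_adjoint_el_apply hA₀ (by simp; omega) (by simp; omega)
      (h₁ m) (h₂ m) (h₃ n) (h₄ n), if_neg (by omega)]
    rfl
  · rw [hA.comp_adjoint_add_comp_adjoint_el_apply hA₀ (by simp; omega) (by simp; omega)
      (h₃ m) (h₄ m) (h₃ n) (h₄ n)]
    simp [el_apply]

end
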